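/- Let 𝒜 = ⟨A,R⟩ be an almost bounded structure and 𝒜^* an ultrapower of 𝒜 over an ultrafilter that is at least κ-regular for some infinite κ. Let u ∈ Uf(A) and [a]_𝒟 ∈ A^*. If for every n ∈ ℕ we have ⟨u⟩^n_{S^ue} ≅_P ⟨[a]_𝒟⟩^n_{S^*} (i.e. [a]_𝒟 realizes the type tp(u)), then ⟨u⟩^ω_{S^ue} ≅_P ⟨[a]_𝒟⟩^ω_{S^*}. -/
import Mathlib


open FirstOrder Cardinal

namespace UEx

/-- Elements of infinite in- or out-degree. -/
def RInf (R : A → A → Prop) : Set A :=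
  {w | {v | R w v}.Infinite ∨ {v | R v w}.Infinite}

/-- A uniform finite bound on all in- and out-degrees. -/
def Bounded (R : A → A → Prop) : Prop :=
  ∃ n : ℕ, ∀ w : A, {v | R w v}.Finite ∧ {v | R v w}.Finite ∧
    {v | R w v}.ncard ≤ n ∧ {v | R v w}.ncard ≤ n

/-- Almost bounded: finitely many elements of infinite degree, and a uniform
finite bound on the degrees of the remaining elements. -/
def AlmostBounded (R : A → A → Prop) : Prop :=
  (RInf R).Finite ∧ ∃ n : ℕ, ∀ w ∉ RInf R,
    {v | R w v}.ncard ≤ n ∧ {v | R v w}.ncard ≤ n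

/-- P = {(s,t) ∈ R : s ∈ R∞ or t ∈ R∞}. -/
def PRel (R : A → A → Prop) (s t : A) : Prop := R s t ∧ (s ∈ RInf R ∨ t ∈ RInf R)

/-- S = R \ P. -/
def SRel (R : A → A → Prop) (s t : A) : Prop := R s t ∧ ¬(s ∈ RInf R ∨ t ∈ RInf R)

/-- The ultrafilter extension of a binary relation. -/
def ueRel (Q : A → A → Prop) (u v : Ultrafilter A) : Prop :=
  ∀ X ∈ v, {w | ∃ s ∈ X, Q w s} ∈ u

/-- The setoid of 𝒟-a.e. equality on `I → A`. -/
def upSetoid (𝒟 : Ultrafilter I) (A : Type*) : Setoid (I → A) where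
  r a b := {i | a i = b i} ∈ 𝒟
  iseqv := by
    refine ⟨fun a => ?_, fun {a b} h => ?_, fun {a b c} h1 h2 => ?_⟩
    · have : {i | a i = a i} = (Set.univ : Set I) := by simp
      rw [this]
      exact Filter.univ_mem
    · exact Filter.mem_of_superset h fun i hi => (hi : _ = _).symm
    · exact Filter.mem_of_superset (Filter.inter_mem h1 h2) fun i hi =>
        (hi.1 : _ = _).trans hi.2

/-- The ultrapower of `A` modulo the ultrafilter `𝒟`. -/
def UP (𝒟 : Ultrafilter I) (A : Type*) : Type _ := Quotient (upSetoid 𝒟 A)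

/-- The diagonal embedding into the ultrapower. -/
def diag (𝒟 : Ultrafilter I) (a : A) : UP 𝒟 A := Quotient.mk (upSetoid 𝒟 A) fun _ => a

/-- The relation on the ultrapower given by Łoś's theorem. -/
def upRel (𝒟 : Ultrafilter I) (Q : A → A → Prop) : UP 𝒟 A → UP 𝒟 A → Prop :=
  Quotient.lift₂ (fun a b => {i | Q (a i) (b i)} ∈ 𝒟) <| by
    intro a b a' b' ha hb
    have ha' : {i | a i = a' i} ∈ 𝒟 := ha
    have hb' : {i | b i = b' i} ∈ 𝒟 := hb
    refine propext ⟨fun h => ?_, fun h => ?_⟩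
    · refine Filter.mem_of_superset (Filter.inter_mem (Filter.inter_mem h ha') hb') ?_
      rintro i ⟨⟨h1, h2⟩, h3⟩
      simp only [Set.mem_setOf_eq] at *
      rw [← h2, ← h3]; exact h1
    · refine Filter.mem_of_superset (Filter.inter_mem (Filter.inter_mem h ha') hb') ?_
      rintro i ⟨⟨h1, h2⟩, h3⟩
      simp only [Set.mem_setOf_eq] at *
      rw [h2, h3]; exact h1

/-- `𝒟` is `κ`-regular. -/
def IsRegular (𝒟 : Ultrafilter I) (κ : Cardinal) : Prop :=
  ∃ E : Set (Set I), (∀ X ∈ E, X ∈ 𝒟) ∧ #E = κ ∧ ∀ i : I, {X ∈ E | i ∈ X}.Finite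

/-- The set of elements reachable from `w` in at most `n` steps along `Q ∪ Q⁻¹`. -/
def nbhd (Q : B → B → Prop) (w : B) : ℕ → Set B
  | 0 => {w}
  | n + 1 => nbhd Q w n ∪ {v | ∃ x ∈ nbhd Q w n, Q x v ∨ Q v x}

/-- The ω-neighborhood of `w` along `Q ∪ Q⁻¹`. -/
def onbhd (Q : B → B → Prop) (w : B) : Set B := ⋃ n, nbhd Q w n

/-- A `P`-isomorphism between the substructure of `B` on `sB` (with relation `SB`,
base point `b`) and the substructure of `C` on `sC` (with relation `SC`, base point `c`),
compatible with the `P`-connections to the elements of `Rinf`. -/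
def IsPIsoOn {A B C : Type*} (Rinf : Set A)
    (SB : B → B → Prop) (PBr : B → A → Prop) (PBl : A → B → Prop)
    (SC : C → C → Prop) (PCr : C → A → Prop) (PCl : A → C → Prop)
    (sB : Set B) (sC : Set C) (b : B) (c : C) : Prop :=
  ∃ f : sB ≃ sC,
    (∀ (hb : b ∈ sB) (hc : c ∈ sC), f ⟨b, hb⟩ = ⟨c, hc⟩) ∧
    (∀ x y : sB, SB x y ↔ SC (f x) (f y)) ∧
    (∀ x : sB, ∀ t ∈ Rinf, (PBr x t ↔ PCr (f x) t) ∧ (PBl t x ↔ PCl t (f x)))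

/-- `P`-isomorphism of neighborhoods, both taken inside the ultrafilter extension
(elements `t` of `R_∞` are identified with the principal ultrafilters `π_t`). -/
def PIsoUeUe {A : Type*} (R : A → A → Prop)
    (sB sC : Set (Ultrafilter A)) (b c : Ultrafilter A) : Prop :=
  IsPIsoOn (RInf R)
    (ueRel (SRel R)) (fun x t => ueRel (PRel R) x (pure t)) (fun t x => ueRel (PRel R) (pure t) x)
    (ueRel (SRel R)) (fun x t => ueRel (PRel R) x (pure t)) (fun t x => ueRel (PRel R) (pure t) x)
    sB sC b c

/-- `P`-isomorphism of a neighborhood in the ultrafilter extension with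
a neighborhood in the original structure. -/
def PIsoUeA {A : Type*} (R : A → A → Prop)
    (sB : Set (Ultrafilter A)) (sC : Set A) (b : Ultrafilter A) (c : A) : Prop :=
  IsPIsoOn (RInf R)
    (ueRel (SRel R)) (fun x t => ueRel (PRel R) x (pure t)) (fun t x => ueRel (PRel R) (pure t) x)
    (SRel R) (fun x t => PRel R x t) (fun t x => PRel R t x)
    sB sC b c

/-- `P`-isomorphism of a neighborhood in the ultrafilter extension with
a neighborhood in the ultrapower (elements `t` of `R_∞` are identified with
the principal ultrafilter `π_t`, resp. with the diagonal image of `t`). -/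
def PIsoUeUp {A I : Type*} (R : A → A → Prop) (𝒟 : Ultrafilter I)
    (sB : Set (Ultrafilter A)) (sC : Set (UP 𝒟 A)) (b : Ultrafilter A) (c : UP 𝒟 A) : Prop :=
  IsPIsoOn (RInf R)
    (ueRel (SRel R)) (fun x t => ueRel (PRel R) x (pure t)) (fun t x => ueRel (PRel R) (pure t) x)
    (upRel 𝒟 (SRel R)) (fun x t => upRel 𝒟 (PRel R) x (diag 𝒟 t)) (fun t x => upRel 𝒟 (PRel R) (diag 𝒟 t) x)
    sB sC b c

/-- `P`-isomorphism of neighborhoods, both taken inside the ultrapower. -/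
def PIsoUpUp {A I : Type*} (R : A → A → Prop) (𝒟 : Ultrafilter I)
    (sB sC : Set (UP 𝒟 A)) (b c : UP 𝒟 A) : Prop :=
  IsPIsoOn (RInf R)
    (upRel 𝒟 (SRel R)) (fun x t => upRel 𝒟 (PRel R) x (diag 𝒟 t)) (fun t x => upRel 𝒟 (PRel R) (diag 𝒟 t) x)
    (upRel 𝒟 (SRel R)) (fun x t => upRel 𝒟 (PRel R) x (diag 𝒟 t)) (fun t x => upRel 𝒟 (PRel R) (diag 𝒟 t) x)
    sB sC b c
section Konig
variable {X : ℕ → Type*} (r : ∀ n, X (n+1) → X n)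

def rho : ∀ {m n : ℕ}, m ≤ n → X n → X m :=
  fun {m n} h => Nat.leRecOn h (fun {k} (φ : X k → X m) => φ ∘ r k) id

lemma rho_self {m : ℕ} (x : X m) : rho r (le_refl m) x = x :=
  congrFun (Nat.leRecOn_self (C := fun k => X k → X m)
    (next := fun {k} (φ : X k → X m) => φ ∘ r k) id) x

lemma rho_succ {m n : ℕ} (h1 : m ≤ n) (h2 : m ≤ n+1) (x : X (n+1)) :
    rho r h2 x = rho r h1 (r n x) :=
  congrFun (Nat.leRecOn_succ (C := fun k => X k → X m) h1
    (next := fun {k} (φ : X k → X m) => φ ∘ r k) id) x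

lemma rho_comp {m k : ℕ} (h1 : m ≤ k) : ∀ {n : ℕ} (h2 : k ≤ n) (x : X n),
    rho r h1 (rho r h2 x) = rho r (h1.trans h2) x := by
  intro n
  induction n with
  | zero =>
    intro h2 x
    have hk : k = 0 := Nat.le_zero.mp h2
    subst hk
    rw [rho_self]
  | succ n ih =>
    intro h2 x
    rcases Nat.lt_or_ge k (n+1) with hk | hk
    · have hkn : k ≤ n := Nat.lt_succ_iff.mp hk
      rw [rho_succ r hkn h2, ih hkn (r n x), rho_succ r (h1.trans hkn) (h1.trans h2)]
    · have hk' : k = n+1 := le_antisymm h2 hk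
      subst hk'
      rw [rho_self]

lemma range_anti {m k n : ℕ} (h1 : m ≤ k) (h2 : k ≤ n) {x : X m}
    (hx : x ∈ Set.range (rho r (h1.trans h2))) : x ∈ Set.range (rho r h1) := by
  obtain ⟨z, hz⟩ := hx
  exact ⟨rho r h2 z, by rw [rho_comp]; exact hz⟩

def Tset (m : ℕ) : Set (X m) := {x | ∀ n (h : m ≤ n), x ∈ Set.range (rho r h)}

lemma Tset_nonempty [∀ n, Finite (X n)] (hne : ∀ n, Nonempty (X n)) (m : ℕ) :
    (Tset r m).Nonempty := by
  by_contra hc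
  rw [Set.not_nonempty_iff_eq_empty] at hc
  have h1 : ∀ x : X m, ∃ n, ∃ h : m ≤ n, x ∉ Set.range (rho r h) := by
    intro x
    by_contra hx
    push_neg at hx
    have : x ∈ Tset r m := fun n h => hx n h
    rw [hc] at this
    exact this
  choose N hle hnot using h1
  obtain ⟨K0, hK0⟩ := (Set.finite_range N).bddAbove
  have hmK : m ≤ max K0 m := le_max_right _ _
  obtain ⟨y⟩ := hne (max K0 m)
  refine hnot (rho r hmK y) ?_
  exact range_anti r (hle _) (le_trans (hK0 (Set.mem_range_self _)) (le_max_left _ _)) ⟨y, rfl⟩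

lemma step_exists [∀ n, Finite (X n)] {m : ℕ} {x : X m} (hx : x ∈ Tset r m) :
    ∃ y : X (m+1), r m y = x ∧ y ∈ Tset r (m+1) := by
  by_contra hc
  push_neg at hc
  have key : ∀ y : X (m+1), ∃ n, ∃ h : m+1 ≤ n, (r m y = x → y ∉ Set.range (rho r h)) := by
    intro y
    by_cases hy : r m y = x
    · have h2 := hc y hy
      rw [Tset, Set.mem_setOf_eq] at h2
      push_neg at h2
      obtain ⟨n, h, hn⟩ := h2
      exact ⟨n, h, fun _ => hn⟩
    · exact ⟨m+1, le_refl _, fun h => absurd h hy⟩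
  choose N hle hnot using key
  obtain ⟨K0, hK0⟩ := (Set.finite_range N).bddAbove
  have hmK : m+1 ≤ max K0 (m+1) := le_max_right _ _
  obtain ⟨z, hz⟩ := hx (max K0 (m+1)) (le_trans (Nat.le_succ m) hmK)
  have hry : r m (rho r hmK z) = x := by
    have h01 : m ≤ m+1 := Nat.le_succ m
    have e1 : rho r h01 (rho r hmK z) = x := by
      rw [rho_comp]; exact hz
    rw [rho_succ r (le_refl m) h01, rho_self] at e1
    exact e1
  refine hnot (rho r hmK z) hry ?_
  exact range_anti r (hle _) (le_trans (hK0 (Set.mem_range_self _)) (le_max_left _ _)) ⟨z, rfl⟩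

theorem konig [∀ n, Finite (X n)] (hne : ∀ n, Nonempty (X n)) :
    ∃ g : ∀ n, X n, ∀ n, r n (g (n+1)) = g n := by
  have step : ∀ m (p : {x : X m // x ∈ Tset r m}), {y : X (m+1) // r m y = p.1 ∧ y ∈ Tset r (m+1)} :=
    fun m p => Classical.indefiniteDescription _ (step_exists r p.2)
  let g' : ∀ n, {x : X n // x ∈ Tset r n} := fun n =>
    Nat.rec ⟨(Tset_nonempty r hne 0).choose, (Tset_nonempty r hne 0).choose_spec⟩
      (fun n p => ⟨(step n p).1, (step n p).2.2⟩) n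
  exact ⟨fun n => (g' n).1, fun n => (step n (g' n)).2.1⟩

end Konig

section Nbhd
variable {B : Type*} {Q : B → B → Prop} {w : B}

lemma mem_nbhd_self (n : ℕ) : w ∈ nbhd Q w n := by
  induction n with
  | zero => exact rfl
  | succ n ih => exact Or.inl ih

lemma nbhd_mono {m n : ℕ} (h : m ≤ n) : nbhd Q w m ⊆ nbhd Q w n := by
  induction n with
  | zero => rw [Nat.le_zero.mp h]
  | succ n ih =>
    rcases Nat.lt_or_ge m (n+1) with hk | hk
    · exact (ih (Nat.lt_succ_iff.mp hk)).trans Set.subset_union_left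
    · rw [le_antisymm h hk]

lemma nbhd_finite (hd : ∀ x : B, {y | Q x y}.Finite ∧ {y | Q y x}.Finite) (n : ℕ) :
    (nbhd Q w n).Finite := by
  induction n with
  | zero => exact Set.finite_singleton w
  | succ n ih =>
    refine ih.union (Set.Finite.subset (ih.biUnion fun x _ => ((hd x).1.union (hd x).2)) ?_)
    rintro v ⟨x, hx, hq⟩
    exact Set.mem_biUnion hx hq

lemma mem_onbhd_iff {v : B} : v ∈ onbhd Q w ↔ ∃ n, v ∈ nbhd Q w n := by
  unfold onbhd
  exact Set.mem_iUnion

end Nbhd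

section Omega
variable {A B C : Type*}

def LIso (Rinf : Set A) (SB : B → B → Prop) (PBr : B → A → Prop) (PBl : A → B → Prop)
    (SC : C → C → Prop) (PCr : C → A → Prop) (PCl : A → C → Prop) (b : B) (c : C) (n : ℕ) :
    Type _ :=
  {f : ↥(nbhd SB b n) ≃ ↥(nbhd SC c n) //
    (∀ (hb : b ∈ nbhd SB b n) (hc : c ∈ nbhd SC c n), f ⟨b, hb⟩ = ⟨c, hc⟩) ∧
    (∀ x y : ↥(nbhd SB b n), SB x y ↔ SC (f x) (f y)) ∧
    (∀ x : ↥(nbhd SB b n), ∀ t ∈ Rinf, (PBr x t ↔ PCr (f x) t) ∧ (PBl t x ↔ PCl t (f x)))}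

variable {Rinf : Set A} {SB : B → B → Prop} {PBr : B → A → Prop} {PBl : A → B → Prop}
  {SC : C → C → Prop} {PCr : C → A → Prop} {PCl : A → C → Prop} {b : B} {c : C}

lemma maps_nbhd {n : ℕ} (f : ↥(nbhd SB b n) ≃ ↥(nbhd SC c n))
    (hbase : ∀ (hb : b ∈ nbhd SB b n) (hc : c ∈ nbhd SC c n), f ⟨b, hb⟩ = ⟨c, hc⟩)
    (hS : ∀ x y : ↥(nbhd SB b n), SB x y ↔ SC (f x) (f y)) :
    ∀ m (h : m ≤ n) (x : B) (hx : x ∈ nbhd SB b m),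
      (↑(f ⟨x, nbhd_mono h hx⟩) : C) ∈ nbhd SC c m := by
  intro m
  induction m with
  | zero =>
    intro h x hx
    have hxb : x = b := hx
    subst hxb
    rw [hbase (nbhd_mono h hx) (nbhd_mono (Nat.zero_le n) (mem_nbhd_self 0))]
    exact mem_nbhd_self 0
  | succ m ih =>
    intro h x hx
    have hx' : x ∈ nbhd SB b (m+1) := hx
    have hm : m ≤ n := (Nat.le_succ m).trans h
    rcases hx with hx | ⟨y, hy, hq⟩
    · exact nbhd_mono (Nat.le_succ m) (ih hm x hx)
    · refine Or.inr ⟨↑(f ⟨y, nbhd_mono hm hy⟩), ih hm y hy, ?_⟩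
      rcases hq with hq | hq
      · exact Or.inl ((hS ⟨y, nbhd_mono hm hy⟩ ⟨x, nbhd_mono h hx'⟩).mp hq)
      · exact Or.inr ((hS ⟨x, nbhd_mono h hx'⟩ ⟨y, nbhd_mono hm hy⟩).mp hq)

lemma base_symm {sB : Set B} {sC : Set C} (f : ↥sB ≃ ↥sC)
    (hbase : ∀ (hb : b ∈ sB) (hc : c ∈ sC), f ⟨b, hb⟩ = ⟨c, hc⟩) :
    ∀ (hc : c ∈ sC) (hb : b ∈ sB), f.symm ⟨c, hc⟩ = ⟨b, hb⟩ := by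
  intro hc hb
  rw [← hbase hb hc, Equiv.symm_apply_apply]

lemma S_symm {sB : Set B} {sC : Set C} (f : ↥sB ≃ ↥sC)
    (hS : ∀ x y : ↥sB, SB x y ↔ SC (f x) (f y)) :
    ∀ x y : ↥sC, SC x y ↔ SB (f.symm x) (f.symm y) := by
  intro x y
  have h2 := hS (f.symm x) (f.symm y)
  rw [Equiv.apply_symm_apply, Equiv.apply_symm_apply] at h2
  exact h2.symm

def restrictEquiv {n : ℕ} (F : LIso Rinf SB PBr PBl SC PCr PCl b c (n+1)) :
    ↥(nbhd SB b n) ≃ ↥(nbhd SC c n) where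
  toFun x := ⟨(F.1 ⟨x.1, nbhd_mono (Nat.le_succ n) x.2⟩).1,
    maps_nbhd F.1 F.2.1 F.2.2.1 n (Nat.le_succ n) x.1 x.2⟩
  invFun z := ⟨(F.1.symm ⟨z.1, nbhd_mono (Nat.le_succ n) z.2⟩).1,
    maps_nbhd F.1.symm (base_symm F.1 F.2.1) (S_symm F.1 F.2.2.1) n (Nat.le_succ n) z.1 z.2⟩
  left_inv x := by
    apply Subtype.ext
    have h0 : F.1.symm (F.1 ⟨x.1, nbhd_mono (Nat.le_succ n) x.2⟩)
        = ⟨x.1, nbhd_mono (Nat.le_succ n) x.2⟩ := F.1.symm_apply_apply _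
    exact congrArg (fun (w : ↥(nbhd SB b (n+1))) => w.1) h0
  right_inv z := by
    apply Subtype.ext
    have h0 : F.1 (F.1.symm ⟨z.1, nbhd_mono (Nat.le_succ n) z.2⟩)
        = ⟨z.1, nbhd_mono (Nat.le_succ n) z.2⟩ := F.1.apply_symm_apply _
    exact congrArg (fun (w : ↥(nbhd SC c (n+1))) => w.1) h0

def restrictL {n : ℕ} (F : LIso Rinf SB PBr PBl SC PCr PCl b c (n+1)) :
    LIso Rinf SB PBr PBl SC PCr PCl b c n := by
  refine ⟨restrictEquiv F, ?_, ?_, ?_⟩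
  · intro hb hc
    apply Subtype.ext
    exact congrArg (fun (w : ↥(nbhd SC c (n+1))) => w.1)
      (F.2.1 (nbhd_mono (Nat.le_succ n) hb) (nbhd_mono (Nat.le_succ n) hc))
  · intro x y
    exact F.2.2.1 ⟨x.1, nbhd_mono (Nat.le_succ n) x.2⟩ ⟨y.1, nbhd_mono (Nat.le_succ n) y.2⟩
  · intro x t ht
    exact F.2.2.2 ⟨x.1, nbhd_mono (Nat.le_succ n) x.2⟩ t ht

def symmL {n : ℕ} (F : LIso Rinf SB PBr PBl SC PCr PCl b c n) :
    LIso Rinf SC PCr PCl SB PBr PBl c b n :=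
  ⟨F.1.symm, base_symm F.1 F.2.1, S_symm F.1 F.2.2.1, fun x t ht => by
    have h2 := F.2.2.2 (F.1.symm x) t ht
    rw [Equiv.apply_symm_apply] at h2
    exact ⟨h2.1.symm, h2.2.symm⟩⟩

lemma restrict_symm {n : ℕ} (F : LIso Rinf SB PBr PBl SC PCr PCl b c (n+1)) :
    restrictL (symmL F) = symmL (restrictL F) :=
  Subtype.ext (Equiv.ext fun z => Subtype.ext rfl)

lemma symmL_symmL {n : ℕ} (F : LIso Rinf SB PBr PBl SC PCr PCl b c n) :
    symmL (symmL F) = F :=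
  Subtype.ext (Equiv.symm_symm _)

lemma agree {g : ∀ n, LIso Rinf SB PBr PBl SC PCr PCl b c n}
    (hg : ∀ n, restrictL (g (n+1)) = g n) :
    ∀ (n m : ℕ) (h : m ≤ n) (x : B) (hx : x ∈ nbhd SB b m),
      (↑((g n).1 ⟨x, nbhd_mono h hx⟩) : C) = ↑((g m).1 ⟨x, hx⟩) := by
  intro n
  induction n with
  | zero =>
    intro m h x hx
    have hm : m = 0 := Nat.le_zero.mp h
    subst hm
    rfl
  | succ n ih =>
    intro m h x hx
    rcases Nat.lt_or_ge m (n+1) with hk | hk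
    · have hmn : m ≤ n := Nat.lt_succ_iff.mp hk
      have e1 : (↑((g (n+1)).1 ⟨x, nbhd_mono h hx⟩) : C)
          = ↑((restrictL (g (n+1))).1 ⟨x, nbhd_mono hmn hx⟩) := rfl
      rw [e1, hg n]
      exact ih m hmn x hx
    · have hm : m = n+1 := le_antisymm h hk
      subst hm
      rfl

noncomputable def omegaFun (g : ∀ n, LIso Rinf SB PBr PBl SC PCr PCl b c n)
    (x : ↥(onbhd SB b)) : ↥(onbhd SC c) :=
  ⟨↑((g (mem_onbhd_iff.mp x.2).choose).1 ⟨↑x, (mem_onbhd_iff.mp x.2).choose_spec⟩),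
   mem_onbhd_iff.mpr ⟨_, ((g (mem_onbhd_iff.mp x.2).choose).1
     ⟨↑x, (mem_onbhd_iff.mp x.2).choose_spec⟩).2⟩⟩

lemma omegaFun_spec {g : ∀ n, LIso Rinf SB PBr PBl SC PCr PCl b c n}
    (hg : ∀ n, restrictL (g (n+1)) = g n) (x : ↥(onbhd SB b)) (m : ℕ)
    (hx : ↑x ∈ nbhd SB b m) :
    (↑(omegaFun g x) : C) = ↑((g m).1 ⟨↑x, hx⟩) := by
  have hxk : (↑x : B) ∈ nbhd SB b (mem_onbhd_iff.mp x.2).choose :=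
    (mem_onbhd_iff.mp x.2).choose_spec
  set k := (mem_onbhd_iff.mp x.2).choose with hk
  have e0 : (↑(omegaFun g x) : C) = ↑((g k).1 ⟨↑x, hxk⟩) := rfl
  have e1 := agree hg (max k m) k (le_max_left k m) ↑x hxk
  have e2 := agree hg (max k m) m (le_max_right k m) ↑x hx
  rw [e0, ← e1, ← e2]

lemma omegaFun_inv {g : ∀ n, LIso Rinf SB PBr PBl SC PCr PCl b c n}
    (hg : ∀ n, restrictL (g (n+1)) = g n) (x : ↥(onbhd SB b)) :
    omegaFun (fun n => symmL (g n)) (omegaFun g x) = x := by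
  have hg' : ∀ n, restrictL (symmL (g (n+1))) = symmL (g n) := fun n => by
    rw [restrict_symm, hg n]
  obtain ⟨m, hx⟩ := mem_onbhd_iff.mp x.2
  apply Subtype.ext
  have h1 : (↑(omegaFun g x) : C) = ↑((g m).1 ⟨↑x, hx⟩) := omegaFun_spec hg x m hx
  have h2 : (↑(omegaFun g x) : C) ∈ nbhd SC c m := h1 ▸ ((g m).1 ⟨↑x, hx⟩).2
  have h3 := omegaFun_spec (g := fun n => symmL (g n)) hg' (omegaFun g x) m h2
  rw [h3]
  have h4 : (⟨↑(omegaFun g x), h2⟩ : ↥(nbhd SC c m)) = (g m).1 ⟨↑x, hx⟩ := Subtype.ext h1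
  show (↑((g m).1.symm ⟨↑(omegaFun g x), h2⟩) : B) = ↑x
  rw [h4, Equiv.symm_apply_apply]

theorem omega_of_levels (Rinf : Set A) (SB : B → B → Prop) (PBr : B → A → Prop)
    (PBl : A → B → Prop) (SC : C → C → Prop) (PCr : C → A → Prop) (PCl : A → C → Prop)
    (b : B) (c : C)
    (hfin : ∀ n, (nbhd SB b n).Finite)
    (h : ∀ n, IsPIsoOn Rinf SB PBr PBl SC PCr PCl (nbhd SB b n) (nbhd SC c n) b c) :
    IsPIsoOn Rinf SB PBr PBl SC PCr PCl (onbhd SB b) (onbhd SC c) b c := by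
  classical
  have hfinL : ∀ n, Finite (LIso Rinf SB PBr PBl SC PCr PCl b c n) := by
    intro n
    have h1 : Finite ↥(nbhd SB b n) := (hfin n).to_subtype
    have h2 : Finite ↥(nbhd SC c n) := by
      obtain ⟨f, -⟩ := h n
      exact Finite.of_equiv _ f
    exact Subtype.finite
  have hneL : ∀ n, Nonempty (LIso Rinf SB PBr PBl SC PCr PCl b c n) := by
    intro n
    obtain ⟨f, h1, h2, h3⟩ := h n
    exact ⟨⟨f, h1, h2, h3⟩⟩
  obtain ⟨g, hg⟩ := konig (X := fun n => LIso Rinf SB PBr PBl SC PCr PCl b c n)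
    (fun n => restrictL) hneL
  have hg' : ∀ n, restrictL (symmL (g (n+1))) = symmL (g n) := fun n => by
    rw [restrict_symm]
    exact congrArg symmL (hg n)
  have hss : (fun n => symmL (symmL (g n))) = g := funext fun n => symmL_symmL (g n)
  have hGF : ∀ x, omegaFun (fun n => symmL (g n)) (omegaFun g x) = x :=
    omegaFun_inv hg
  have hFG : ∀ z, omegaFun g (omegaFun (fun n => symmL (g n)) z) = z := by
    intro z
    have h5 := omegaFun_inv (g := fun n => symmL (g n)) hg' z
    rw [hss] at h5
    exact h5
  refine ⟨⟨omegaFun g, omegaFun (fun n => symmL (g n)), hGF, hFG⟩, ?_, ?_, ?_⟩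
  · intro hb hc
    apply Subtype.ext
    show (↑(omegaFun g ⟨b, hb⟩) : C) = c
    rw [omegaFun_spec hg ⟨b, hb⟩ 0 (mem_nbhd_self 0)]
    exact congrArg Subtype.val ((g 0).2.1 (mem_nbhd_self 0) (mem_nbhd_self 0))
  · intro x y
    obtain ⟨m1, hx⟩ := mem_onbhd_iff.mp x.2
    obtain ⟨m2, hy⟩ := mem_onbhd_iff.mp y.2
    have hxN : (↑x : B) ∈ nbhd SB b (max m1 m2) := nbhd_mono (le_max_left m1 m2) hx
    have hyN : (↑y : B) ∈ nbhd SB b (max m1 m2) := nbhd_mono (le_max_right m1 m2) hy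
    show SB ↑x ↑y ↔ SC ↑(omegaFun g x) ↑(omegaFun g y)
    rw [omegaFun_spec hg x _ hxN, omegaFun_spec hg y _ hyN]
    exact (g (max m1 m2)).2.2.1 ⟨↑x, hxN⟩ ⟨↑y, hyN⟩
  · intro x t ht
    obtain ⟨m, hx⟩ := mem_onbhd_iff.mp x.2
    show (PBr ↑x t ↔ PCr ↑(omegaFun g x) t) ∧ (PBl t ↑x ↔ PCl t ↑(omegaFun g x))
    rw [omegaFun_spec hg x m hx]
    exact (g m).2.2.2 ⟨↑x, hx⟩ t ht

end Omega

section UeDegrees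
variable {A : Type*}

lemma exists_mem_disjoint (t : Finset (Ultrafilter A)) :
    ∃ Y : Ultrafilter A → Set A, (∀ v ∈ t, Y v ∈ v) ∧
      ∀ v ∈ t, ∀ w ∈ t, v ≠ w → Disjoint (Y v) (Y w) := by
  classical
  have sep : ∀ v w : Ultrafilter A, ∃ s : Set A, v ≠ w → (s ∈ v ∧ sᶜ ∈ w) := by
    intro v w
    by_cases hvw : v = w
    · exact ⟨∅, fun h => absurd hvw h⟩
    · have hex : ∃ s : Set A, s ∈ v ∧ s ∉ w := by
        by_contra hc
        push_neg at hc
        refine hvw ?_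
        apply Ultrafilter.coe_injective
        apply Filter.ext
        intro s
        constructor
        · exact hc s
        · intro hsw
          by_contra hsv
          have h1 : sᶜ ∈ v := Ultrafilter.compl_mem_iff_notMem.mpr hsv
          have h2 : sᶜ ∈ w := hc _ h1
          exact (Ultrafilter.compl_mem_iff_notMem.mp h2) hsw
      obtain ⟨s, hs1, hs2⟩ := hex
      exact ⟨s, fun _ => ⟨hs1, Ultrafilter.compl_mem_iff_notMem.mpr hs2⟩⟩
  choose D hD using sep
  refine ⟨fun v => ⋂ w ∈ t.erase v, (D v w ∩ (D w v)ᶜ), ?_, ?_⟩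
  · intro v hv
    refine (Filter.biInter_mem (t.erase v).finite_toSet).mpr ?_
    intro w hw
    have hne : v ≠ w := (Finset.ne_of_mem_erase hw).symm
    exact Filter.inter_mem (hD v w hne).1 (hD w v hne.symm).2
  · intro v hv w hw hne
    rw [Set.disjoint_left]
    intro x hxv hxw
    have h1 : x ∈ D v w ∩ (D w v)ᶜ :=
      Set.mem_iInter₂.mp hxv w (Finset.mem_erase.mpr ⟨hne.symm, hw⟩)
    have h2 : x ∈ D w v ∩ (D v w)ᶜ :=
      Set.mem_iInter₂.mp hxw v (Finset.mem_erase.mpr ⟨hne, hv⟩)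
    exact h2.2 h1.1

lemma ueRel_out_finite (S : A → A → Prop) (n : ℕ)
    (hd : ∀ x, {y | S x y}.Finite) (hb : ∀ x, {y | S x y}.ncard ≤ n) (u : Ultrafilter A) :
    {v | ueRel S u v}.Finite := by
  classical
  by_contra hinf
  obtain ⟨t, hts, htc⟩ := Set.Infinite.exists_subset_card_eq hinf (n+1)
  obtain ⟨Y, hY, hYd⟩ := exists_mem_disjoint t
  have hmem : ∀ v ∈ t, {w | ∃ s ∈ Y v, S w s} ∈ u := fun v hv => (hts hv) (Y v) (hY v hv)
  have hint : (⋂ v ∈ t, {w | ∃ s ∈ Y v, S w s}) ∈ u :=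
    (Filter.biInter_mem t.finite_toSet).mpr hmem
  obtain ⟨w0, hw0⟩ := Ultrafilter.nonempty_of_mem hint
  have hw0' := Set.mem_iInter₂.mp hw0
  have hsel : ∀ v : Ultrafilter A, ∃ s : A, v ∈ t → (s ∈ Y v ∧ S w0 s) := by
    intro v
    by_cases hv : v ∈ t
    · obtain ⟨s, hs1, hs2⟩ := hw0' v hv
      exact ⟨s, fun _ => ⟨hs1, hs2⟩⟩
    · exact ⟨w0, fun h => absurd h hv⟩
  choose sv hsv using hsel
  have hinj : Set.InjOn sv ↑t := by
    intro v hv w hw hvw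
    by_contra hne
    exact Set.disjoint_left.mp (hYd v hv w hw hne) (hsv v hv).1 (hvw ▸ (hsv w hw).1)
  have hsub : ↑(t.image sv) ⊆ {y | S w0 y} := by
    intro y hy
    rw [Finset.coe_image] at hy
    obtain ⟨v, hv, rfl⟩ := hy
    exact (hsv v hv).2
  have hle : n + 1 ≤ n := by
    calc n + 1 = t.card := htc.symm
    _ = (t.image sv).card := (Finset.card_image_of_injOn hinj).symm
    _ = (↑(t.image sv) : Set A).ncard := (Set.ncard_coe_finset _).symm
    _ ≤ {y | S w0 y}.ncard := Set.ncard_le_ncard hsub (hd w0)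
    _ ≤ n := hb w0
  omega

lemma ueRel_in_finite (S : A → A → Prop) (n : ℕ)
    (hd : ∀ x, {y | S y x}.Finite) (hb : ∀ x, {y | S y x}.ncard ≤ n) (u : Ultrafilter A) :
    {v | ueRel S v u}.Finite := by
  classical
  by_contra hinf
  obtain ⟨t, hts, htc⟩ := Set.Infinite.exists_subset_card_eq hinf (n+1)
  obtain ⟨Y, hY, hYd⟩ := exists_mem_disjoint t
  have hT : ∀ v ∈ t, {s | ∃ w ∈ Y v, S w s} ∈ u := by
    intro v hv
    by_contra hc
    have hcc : {s | ∃ w ∈ Y v, S w s}ᶜ ∈ u := Ultrafilter.compl_mem_iff_notMem.mpr hc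
    have h2 : {w | ∃ s ∈ ({s | ∃ w ∈ Y v, S w s}ᶜ : Set A), S w s} ∈ v := (hts hv) _ hcc
    have h3 := Filter.inter_mem (hY v hv) h2
    obtain ⟨w, hwY, s, hsc, hws⟩ := Ultrafilter.nonempty_of_mem h3
    exact hsc ⟨w, hwY, hws⟩
  have hint : (⋂ v ∈ t, {s | ∃ w ∈ Y v, S w s}) ∈ u :=
    (Filter.biInter_mem t.finite_toSet).mpr hT
  obtain ⟨s0, hs0⟩ := Ultrafilter.nonempty_of_mem hint
  have hs0' := Set.mem_iInter₂.mp hs0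
  have hsel : ∀ v : Ultrafilter A, ∃ w : A, v ∈ t → (w ∈ Y v ∧ S w s0) := by
    intro v
    by_cases hv : v ∈ t
    · obtain ⟨w, hw1, hw2⟩ := hs0' v hv
      exact ⟨w, fun _ => ⟨hw1, hw2⟩⟩
    · exact ⟨s0, fun h => absurd h hv⟩
  choose wv hwv using hsel
  have hinj : Set.InjOn wv ↑t := by
    intro v hv w hw hvw
    by_contra hne
    exact Set.disjoint_left.mp (hYd v hv w hw hne) (hwv v hv).1 (hvw ▸ (hwv w hw).1)
  have hsub : ↑(t.image wv) ⊆ {y | S y s0} := by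
    intro y hy
    rw [Finset.coe_image] at hy
    obtain ⟨v, hv, rfl⟩ := hy
    exact (hwv v hv).2
  have hle : n + 1 ≤ n := by
    calc n + 1 = t.card := htc.symm
    _ = (t.image wv).card := (Finset.card_image_of_injOn hinj).symm
    _ = (↑(t.image wv) : Set A).ncard := (Set.ncard_coe_finset _).symm
    _ ≤ {y | S y s0}.ncard := Set.ncard_le_ncard hsub (hd s0)
    _ ≤ n := hb s0
  omega

end UeDegrees

/-- If `[a]` realizes `tp(u)` (its `n`-neighborhoods are `P`-isomorphic to those of
`u` for every `n`), then the ω-neighborhoods of `u` and `[a]` are `P`-isomorphic. -/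
theorem lemma26_i {A I : Type*} [Infinite I] (R : A → A → Prop) (h : AlmostBounded R)
    (κ : Cardinal) (hκ : ℵ₀ ≤ κ) (𝒟 : Ultrafilter I) (hreg : IsRegular 𝒟 κ)
    (u : Ultrafilter A) (a : UP 𝒟 A)
    (htp : ∀ n : ℕ,
      PIsoUeUp R 𝒟 (nbhd (ueRel (SRel R)) u n) (nbhd (upRel 𝒟 (SRel R)) a n) u a) :
    PIsoUeUp R 𝒟 (onbhd (ueRel (SRel R)) u) (onbhd (upRel 𝒟 (SRel R)) a) u a := by
  obtain ⟨hfinRInf, n0, hbd⟩ := h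
  have hSout_sub : ∀ w : A, {v | SRel R w v} ⊆ {v | R w v} := fun w v hv => hv.1
  have hSin_sub : ∀ w : A, {v | SRel R v w} ⊆ {v | R v w} := fun w v hv => hv.1
  have hRout : ∀ w : A, w ∉ RInf R → {v | R w v}.Finite := fun w hw =>
    Set.not_infinite.mp (not_or.mp hw).1
  have hRin : ∀ w : A, w ∉ RInf R → {v | R v w}.Finite := fun w hw =>
    Set.not_infinite.mp (not_or.mp hw).2
  have hSout_fin : ∀ w : A, {v | SRel R w v}.Finite := by
    intro w
    by_cases hw : w ∈ RInf R
    · exact Set.Finite.subset Set.finite_empty (fun v hv => absurd (Or.inl hw) hv.2)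
    · exact (hRout w hw).subset (hSout_sub w)
  have hSin_fin : ∀ w : A, {v | SRel R v w}.Finite := by
    intro w
    by_cases hw : w ∈ RInf R
    · exact Set.Finite.subset Set.finite_empty (fun v hv => absurd (Or.inr hw) hv.2)
    · exact (hRin w hw).subset (hSin_sub w)
  have hSout_bd : ∀ w : A, {v | SRel R w v}.ncard ≤ n0 := by
    intro w
    by_cases hw : w ∈ RInf R
    · have he : {v | SRel R w v} = ∅ :=
        Set.eq_empty_iff_forall_notMem.mpr (fun v hv => hv.2 (Or.inl hw))
      rw [he, Set.ncard_empty]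
      exact Nat.zero_le n0
    · exact le_trans (Set.ncard_le_ncard (hSout_sub w) (hRout w hw)) (hbd w hw).1
  have hSin_bd : ∀ w : A, {v | SRel R v w}.ncard ≤ n0 := by
    intro w
    by_cases hw : w ∈ RInf R
    · have he : {v | SRel R v w} = ∅ :=
        Set.eq_empty_iff_forall_notMem.mpr (fun v hv => hv.2 (Or.inr hw))
      rw [he, Set.ncard_empty]
      exact Nat.zero_le n0
    · exact le_trans (Set.ncard_le_ncard (hSin_sub w) (hRin w hw)) (hbd w hw).2
  have hfin : ∀ n, (nbhd (ueRel (SRel R)) u n).Finite :=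
    nbhd_finite (fun x =>
      ⟨ueRel_out_finite (SRel R) n0 hSout_fin hSout_bd x,
       ueRel_in_finite (SRel R) n0 hSin_fin hSin_bd x⟩)
  exact omega_of_levels (RInf R) (ueRel (SRel R))
    (fun x t => ueRel (PRel R) x (pure t)) (fun t x => ueRel (PRel R) (pure t) x)
    (upRel 𝒟 (SRel R)) (fun x t => upRel 𝒟 (PRel R) x (diag 𝒟 t))
    (fun t x => upRel 𝒟 (PRel R) (diag 𝒟 t) x) u a hfin htp

end UEx
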